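/- arXiv:1007.3854 — 9 statements merged into one kernel-verified Lean document; each statement's English description precedes it below -/
import Mathlib

section
/- Let G₁₂, G₂₃, G₁₃, G_∞, ω₁₃ be the geodesic functions and constants defined from (Y₁,Y₂,Y₃) ∈ ℂ³ and parameters G₁,G₂,G₃ ∈ ℂ, and let {·,·} be the Weil–Petersson Poisson bracket with {Y₁,Y₂}={Y₂,Y₃}={Y₃,Y₁}=1. Then for all (Y₁,Y₂,Y₃) ∈ ℂ³ one has the Goldman bracket relation {G₁₂, G₂₃} = G₁₂·G₂₃ − 2·G₁₃ − ω₁₃. -/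
open Complex

/-- The Weil–Petersson Poisson bracket on functions of `(Y₁,Y₂,Y₃) ∈ ℂ³`:
`{f,g} = ∑ᵢ (∂f/∂Yᵢ ∂g/∂Y_{i+1} − ∂g/∂Yᵢ ∂f/∂Y_{i+1})`, indices mod 3,
so that `{Y₁,Y₂} = {Y₂,Y₃} = {Y₃,Y₁} = 1`. -/
noncomputable def wpBracket (f g : (Fin 3 → ℂ) → ℂ) (Y : Fin 3 → ℂ) : ℂ :=
  ∑ i : Fin 3,
    (fderiv ℂ f Y (Pi.single i 1) * fderiv ℂ g Y (Pi.single (i + 1) 1)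
      - fderiv ℂ g Y (Pi.single i 1) * fderiv ℂ f Y (Pi.single (i + 1) 1))

noncomputable abbrev pr (i : Fin 3) : (Fin 3 → ℂ) →L[ℂ] ℂ :=
  ContinuousLinearMap.proj i

lemma hasF12 (G₁ G₂ : ℂ) (Y : Fin 3 → ℂ) :
    HasFDerivAt (fun Y : Fin 3 → ℂ => exp (Y 0 + Y 1) + exp (-Y 0 - Y 1) + exp (-Y 0 + Y 1)
        + G₁ * exp (Y 1) + G₂ * exp (-Y 0))
      (exp (Y 0 + Y 1) • (pr 0 + pr 1)
        + exp (-Y 0 - Y 1) • (-pr 0 - pr 1)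
        + exp (-Y 0 + Y 1) • (-pr 0 + pr 1)
        + G₁ • exp (Y 1) • pr 1
        + G₂ • exp (-Y 0) • (-pr 0)) Y := by
  have h0 : HasFDerivAt (fun Y : Fin 3 → ℂ => Y 0) (pr 0) Y :=
    hasFDerivAt_apply 0 Y
  have h1 : HasFDerivAt (fun Y : Fin 3 → ℂ => Y 1) (pr 1) Y :=
    hasFDerivAt_apply 1 Y
  exact (((((h0.add h1).cexp.add (h0.neg.sub h1).cexp).add
    (h0.neg.add h1).cexp).add ((h1.cexp).const_mul G₁)).add
    ((h0.neg.cexp).const_mul G₂))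

lemma hasF23 (G₂ G₃ : ℂ) (Y : Fin 3 → ℂ) :
    HasFDerivAt (fun Y : Fin 3 → ℂ => exp (Y 1 + Y 2) + exp (-Y 1 - Y 2) + exp (-Y 1 + Y 2)
        + G₂ * exp (Y 2) + G₃ * exp (-Y 1))
      (exp (Y 1 + Y 2) • (pr 1 + pr 2)
        + exp (-Y 1 - Y 2) • (-pr 1 - pr 2)
        + exp (-Y 1 + Y 2) • (-pr 1 + pr 2)
        + G₂ • exp (Y 2) • pr 2
        + G₃ • exp (-Y 1) • (-pr 1)) Y := by
  have h1 : HasFDerivAt (fun Y : Fin 3 → ℂ => Y 1) (pr 1) Y :=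
    hasFDerivAt_apply 1 Y
  have h2 : HasFDerivAt (fun Y : Fin 3 → ℂ => Y 2) (pr 2) Y :=
    hasFDerivAt_apply 2 Y
  exact (((((h1.add h2).cexp.add (h1.neg.sub h2).cexp).add
    (h1.neg.add h2).cexp).add ((h2.cexp).const_mul G₂)).add
    ((h1.neg.cexp).const_mul G₃))

set_option maxHeartbeats 1600000 in
/-- Goldman bracket relation `{G₁₂, G₂₃} = G₁₂ G₂₃ − 2 G₁₃ − ω₁₃`. -/
theorem goldman_bracket_G12_G23 (G₁ G₂ G₃ : ℂ) (Y : Fin 3 → ℂ) :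
    wpBracket
      (fun Y => exp (Y 0 + Y 1) + exp (-Y 0 - Y 1) + exp (-Y 0 + Y 1)
        + G₁ * exp (Y 1) + G₂ * exp (-Y 0))
      (fun Y => exp (Y 1 + Y 2) + exp (-Y 1 - Y 2) + exp (-Y 1 + Y 2)
        + G₂ * exp (Y 2) + G₃ * exp (-Y 1)) Y
    = (exp (Y 0 + Y 1) + exp (-Y 0 - Y 1) + exp (-Y 0 + Y 1)
        + G₁ * exp (Y 1) + G₂ * exp (-Y 0))
      * (exp (Y 1 + Y 2) + exp (-Y 1 - Y 2) + exp (-Y 1 + Y 2)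
        + G₂ * exp (Y 2) + G₃ * exp (-Y 1))
      - 2 * (exp (Y 2 + Y 0) + exp (-Y 2 - Y 0) + exp (-Y 2 + Y 0)
        + G₃ * exp (Y 0) + G₁ * exp (-Y 2))
      - (G₁ * G₃ + G₂ * (exp (Y 0 + Y 1 + Y 2) + exp (-Y 0 - Y 1 - Y 2))) := by
  rw [wpBracket, (hasF12 G₁ G₂ Y).fderiv, (hasF23 G₂ G₃ Y).fderiv, Fin.sum_univ_three]
  simp only [ContinuousLinearMap.add_apply, ContinuousLinearMap.smul_apply,
    ContinuousLinearMap.neg_apply, ContinuousLinearMap.sub_apply,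
    ContinuousLinearMap.proj_apply, pr, smul_eq_mul, Fin.isValue, Fin.reduceAdd,
    Pi.single_apply, Fin.reduceEq]
  norm_num
  simp only [sub_eq_add_neg, neg_add, neg_neg, Complex.exp_add]
  have hb : cexp (Y 1) * cexp (-Y 1) = 1 := by
    rw [← Complex.exp_add]; simp
  linear_combination (-2 * cexp (Y 0) * cexp (-Y 2) - 2 * cexp (Y 0) * cexp (Y 2)
    - 2 * cexp (Y 0) * G₃ - 2 * cexp (-Y 0) * cexp (-Y 2)
    - 2 * cexp (-Y 2) * G₁ - G₁ * G₃) * hb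
end

section
/- Let G₁₂, G₂₃, G₁₃, G_∞, ω₁₂ be the geodesic functions and constants defined from (Y₁,Y₂,Y₃) ∈ ℂ³ and parameters G₁,G₂,G₃ ∈ ℂ, and let {·,·} be the Weil–Petersson Poisson bracket with {Y₁,Y₂}={Y₂,Y₃}={Y₃,Y₁}=1. Then for all (Y₁,Y₂,Y₃) ∈ ℂ³ one has the Goldman bracket relation {G₂₃, G₁₃} = G₂₃·G₁₃ − 2·G₁₂ − ω₁₂. -/
open Complex

set_option maxHeartbeats 1000000

/-- Goldman bracket relation `{G₂₃, G₁₃} = G₂₃ G₁₃ − 2 G₁₂ − ω₁₂`. -/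
theorem goldman_bracket_G23_G13 (G₁ G₂ G₃ : ℂ) (Y : Fin 3 → ℂ) :
    wpBracket
      (fun Y => exp (Y 1 + Y 2) + exp (-Y 1 - Y 2) + exp (-Y 1 + Y 2)
        + G₂ * exp (Y 2) + G₃ * exp (-Y 1))
      (fun Y => exp (Y 2 + Y 0) + exp (-Y 2 - Y 0) + exp (-Y 2 + Y 0)
        + G₃ * exp (Y 0) + G₁ * exp (-Y 2)) Y
    = (exp (Y 1 + Y 2) + exp (-Y 1 - Y 2) + exp (-Y 1 + Y 2)
        + G₂ * exp (Y 2) + G₃ * exp (-Y 1))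
      * (exp (Y 2 + Y 0) + exp (-Y 2 - Y 0) + exp (-Y 2 + Y 0)
        + G₃ * exp (Y 0) + G₁ * exp (-Y 2))
      - 2 * (exp (Y 0 + Y 1) + exp (-Y 0 - Y 1) + exp (-Y 0 + Y 1)
        + G₁ * exp (Y 1) + G₂ * exp (-Y 0))
      - (G₁ * G₂ + G₃ * (exp (Y 0 + Y 1 + Y 2) + exp (-Y 0 - Y 1 - Y 2))) := by
  set P : Fin 3 → (Fin 3 → ℂ) →L[ℂ] ℂ := fun i => ContinuousLinearMap.proj i with hP
  have hf : HasFDerivAt (fun Y : Fin 3 → ℂ => exp (Y 1 + Y 2) + exp (-Y 1 - Y 2)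
      + exp (-Y 1 + Y 2) + G₂ * exp (Y 2) + G₃ * exp (-Y 1))
      (exp (Y 1 + Y 2) • (P 1 + P 2) + exp (-Y 1 - Y 2) • (-P 1 - P 2)
        + exp (-Y 1 + Y 2) • (-P 1 + P 2) + G₂ • (exp (Y 2) • P 2)
        + G₃ • (exp (-Y 1) • (-P 1))) Y := by
    exact (((((P 1).hasFDerivAt.add (P 2).hasFDerivAt).cexp.add
      (((P 1).hasFDerivAt.neg.sub (P 2).hasFDerivAt).cexp)).add
      (((P 1).hasFDerivAt.neg.add (P 2).hasFDerivAt).cexp)).add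
      (((P 2).hasFDerivAt.cexp).const_mul G₂)).add
      (((P 1).hasFDerivAt.neg.cexp).const_mul G₃)
  have hg : HasFDerivAt (fun Y : Fin 3 → ℂ => exp (Y 2 + Y 0) + exp (-Y 2 - Y 0)
      + exp (-Y 2 + Y 0) + G₃ * exp (Y 0) + G₁ * exp (-Y 2))
      (exp (Y 2 + Y 0) • (P 2 + P 0) + exp (-Y 2 - Y 0) • (-P 2 - P 0)
        + exp (-Y 2 + Y 0) • (-P 2 + P 0) + G₃ • (exp (Y 0) • P 0)
        + G₁ • (exp (-Y 2) • (-P 2))) Y := by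
    exact (((((P 2).hasFDerivAt.add (P 0).hasFDerivAt).cexp.add
      (((P 2).hasFDerivAt.neg.sub (P 0).hasFDerivAt).cexp)).add
      (((P 2).hasFDerivAt.neg.add (P 0).hasFDerivAt).cexp)).add
      (((P 0).hasFDerivAt.cexp).const_mul G₃)).add
      (((P 2).hasFDerivAt.neg.cexp).const_mul G₁)
  rw [wpBracket, Fin.sum_univ_three, hf.fderiv, hg.fderiv]
  have e0 : (0:Fin 3)+1 = 1 := rfl
  have e1 : (1:Fin 3)+1 = 2 := rfl
  have e2 : (2:Fin 3)+1 = 0 := rfl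
  rw [e0, e1, e2]
  simp only [hP, ContinuousLinearMap.add_apply, ContinuousLinearMap.smul_apply,
    ContinuousLinearMap.neg_apply, ContinuousLinearMap.sub_apply,
    ContinuousLinearMap.proj_apply, smul_eq_mul]
  simp only [Pi.single_apply]
  norm_num [Fin.ext_iff]
  simp only [Complex.exp_add, Complex.exp_sub, Complex.exp_neg]
  have hc : exp (Y 2) * (exp (Y 2))⁻¹ = 1 := mul_inv_cancel₀ (Complex.exp_ne_zero _)
  linear_combination (-(G₁*G₂) - 2*(exp (Y 0))⁻¹*G₂ - 2*(exp (Y 0))⁻¹*(exp (Y 1))⁻¹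
    - 2*exp (Y 1)*G₁ - 2*exp (Y 1)*(exp (Y 0))⁻¹ - 2*exp (Y 0)*exp (Y 1)) * hc
end

section
/- Let G₁₂, G₂₃, G₁₃, G_∞, ω₂₃ be the geodesic functions and constants defined from (Y₁,Y₂,Y₃) ∈ ℂ³ and parameters G₁,G₂,G₃ ∈ ℂ, and let {·,·} be the Weil–Petersson Poisson bracket with {Y₁,Y₂}={Y₂,Y₃}={Y₃,Y₁}=1. Then for all (Y₁,Y₂,Y₃) ∈ ℂ³ one has the Goldman bracket relation {G₁₃, G₁₂} = G₁₂·G₁₃ − 2·G₂₃ − ω₂₃. -/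
open Complex

set_option maxHeartbeats 1000000

/-- Coordinate projection as a continuous linear map. -/
noncomputable abbrev pr3 (i : Fin 3) : (Fin 3 → ℂ) →L[ℂ] ℂ :=
  ContinuousLinearMap.proj i

/-- Goldman bracket relation `{G₁₃, G₁₂} = G₁₂ G₁₃ − 2 G₂₃ − ω₂₃`. -/
theorem goldman_bracket_G13_G12 (G₁ G₂ G₃ : ℂ) (Y : Fin 3 → ℂ) :
    wpBracket
      (fun Y => exp (Y 2 + Y 0) + exp (-Y 2 - Y 0) + exp (-Y 2 + Y 0)
        + G₃ * exp (Y 0) + G₁ * exp (-Y 2))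
      (fun Y => exp (Y 0 + Y 1) + exp (-Y 0 - Y 1) + exp (-Y 0 + Y 1)
        + G₁ * exp (Y 1) + G₂ * exp (-Y 0)) Y
    = (exp (Y 0 + Y 1) + exp (-Y 0 - Y 1) + exp (-Y 0 + Y 1)
        + G₁ * exp (Y 1) + G₂ * exp (-Y 0))
      * (exp (Y 2 + Y 0) + exp (-Y 2 - Y 0) + exp (-Y 2 + Y 0)
        + G₃ * exp (Y 0) + G₁ * exp (-Y 2))
      - 2 * (exp (Y 1 + Y 2) + exp (-Y 1 - Y 2) + exp (-Y 1 + Y 2)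
        + G₂ * exp (Y 2) + G₃ * exp (-Y 1))
      - (G₂ * G₃ + G₁ * (exp (Y 0 + Y 1 + Y 2) + exp (-Y 0 - Y 1 - Y 2))) := by
  have h0 : HasFDerivAt (fun Y : Fin 3 → ℂ => Y 0) (pr3 0) Y := (pr3 0).hasFDerivAt
  have h1 : HasFDerivAt (fun Y : Fin 3 → ℂ => Y 1) (pr3 1) Y := (pr3 1).hasFDerivAt
  have h2 : HasFDerivAt (fun Y : Fin 3 → ℂ => Y 2) (pr3 2) Y := (pr3 2).hasFDerivAt
  have hf : fderiv ℂ (fun Y : Fin 3 → ℂ => exp (Y 2 + Y 0) + exp (-Y 2 - Y 0)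
        + exp (-Y 2 + Y 0) + G₃ * exp (Y 0) + G₁ * exp (-Y 2)) Y
      = exp (Y 2 + Y 0) • (pr3 2 + pr3 0) + exp (-Y 2 - Y 0) • (-pr3 2 - pr3 0)
        + exp (-Y 2 + Y 0) • (-pr3 2 + pr3 0) + G₃ • (exp (Y 0) • pr3 0)
        + G₁ • (exp (-Y 2) • (-pr3 2)) :=
    (((((h2.add h0).cexp).add ((h2.neg.sub h0).cexp)).add
      ((h2.neg.add h0).cexp)).add ((h0.cexp).const_mul G₃)).add
      ((h2.neg.cexp).const_mul G₁) |>.fderiv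
  have hg : fderiv ℂ (fun Y : Fin 3 → ℂ => exp (Y 0 + Y 1) + exp (-Y 0 - Y 1)
        + exp (-Y 0 + Y 1) + G₁ * exp (Y 1) + G₂ * exp (-Y 0)) Y
      = exp (Y 0 + Y 1) • (pr3 0 + pr3 1) + exp (-Y 0 - Y 1) • (-pr3 0 - pr3 1)
        + exp (-Y 0 + Y 1) • (-pr3 0 + pr3 1) + G₁ • (exp (Y 1) • pr3 1)
        + G₂ • (exp (-Y 0) • (-pr3 0)) :=
    (((((h0.add h1).cexp).add ((h0.neg.sub h1).cexp)).add
      ((h0.neg.add h1).cexp)).add ((h1.cexp).const_mul G₁)).add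
      ((h0.neg.cexp).const_mul G₂) |>.fderiv
  have e1 : (0 : Fin 3) + 1 = 1 := rfl
  have e2 : (1 : Fin 3) + 1 = 2 := rfl
  have e3 : (2 : Fin 3) + 1 = 0 := rfl
  rw [wpBracket, Fin.sum_univ_three, e1, e2, e3, hf, hg]
  simp only [ContinuousLinearMap.add_apply, ContinuousLinearMap.sub_apply,
    ContinuousLinearMap.neg_apply, ContinuousLinearMap.smul_apply, pr3,
    ContinuousLinearMap.proj_apply, smul_eq_mul]
  simp only [Pi.single_apply, Fin.reduceEq, reduceIte, mul_one, mul_zero, one_mul,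
    zero_mul, add_zero, zero_add, if_true, if_false]
  simp only [sub_eq_add_neg, neg_add, exp_add, exp_neg]
  have ha : cexp (Y 0) * (cexp (Y 0))⁻¹ = 1 := mul_inv_cancel₀ (exp_ne_zero _)
  linear_combination (-(G₂ * G₃) - 2 * cexp (Y 2) * G₂ - 2 * (cexp (Y 1))⁻¹ * G₃
    - 2 * (cexp (Y 1))⁻¹ * (cexp (Y 2))⁻¹ - 2 * (cexp (Y 1))⁻¹ * cexp (Y 2)
    - 2 * cexp (Y 1) * cexp (Y 2)) * ha
end

section
/- (Fricke relation) For all (Y₁,Y₂,Y₃) ∈ ℂ³ and all parameters G₁,G₂,G₃ ∈ ℂ, the geodesic functions G₁₂, G₂₃, G₁₃, G_∞ and the constants ω₁₂, ω₂₃, ω₁₃ satisfy the identity G₁₂² + G₂₃² + G₁₃² − G₁₂·G₂₃·G₁₃ + G₁₂·ω₁₂ + G₂₃·ω₂₃ + G₁₃·ω₁₃ = 4 − G₁G₂G₃G_∞ − G₁² − G₂² − G₃² − G_∞². -/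
open Complex

set_option maxHeartbeats 1000000 in
lemma fricke_key (a b c ai bi ci G₁ G₂ G₃ : ℂ)
    (ha : a * ai = 1) (hb : b * bi = 1) (hc : c * ci = 1) :
    (a*b + ai*bi + ai*b + G₁*b + G₂*ai) ^ 2
    + (b*c + bi*ci + bi*c + G₂*c + G₃*bi) ^ 2
    + (c*a + ci*ai + ci*a + G₃*a + G₁*ci) ^ 2
    - (a*b + ai*bi + ai*b + G₁*b + G₂*ai) * (b*c + bi*ci + bi*c + G₂*c + G₃*bi)
        * (c*a + ci*ai + ci*a + G₃*a + G₁*ci)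
    + (a*b + ai*bi + ai*b + G₁*b + G₂*ai) * (G₁*G₂ + G₃*(a*b*c + ai*bi*ci))
    + (b*c + bi*ci + bi*c + G₂*c + G₃*bi) * (G₂*G₃ + G₁*(a*b*c + ai*bi*ci))
    + (c*a + ci*ai + ci*a + G₃*a + G₁*ci) * (G₁*G₃ + G₂*(a*b*c + ai*bi*ci))
    = 4 - G₁*G₂*G₃*(a*b*c + ai*bi*ci) - G₁^2 - G₂^2 - G₃^2 - (a*b*c + ai*bi*ci)^2 := by
  linear_combination (2*ci*G₃ + 2*ci^2 - bi*G₂*G₃^2 - bi*ci*G₂*G₃ - bi^2*G₃^2 - 2*bi^2*ci*G₃ - bi^2*ci^2 - c*G₂^2*G₃ + 2*c*ci - c*ci*G₂^2 - 3*c*bi*G₂*G₃ - 2*c*bi*ci*G₂ - 2*c*bi^2*G₃ - 2*c*bi^2*ci - c^2*G₂^2 - 2*c^2*bi*G₂ - c^2*bi^2 + 2*b*G₂ + 2*b*bi - b*bi*G₃^2 - 2*b*bi*ci*G₃ - 2*b*bi*ci^2 - b*c*G₂*G₃ - 2*b*c*ci*G₂ - 2*b*c*bi*G₃ - 2*b*c*bi*ci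 - 2*b*c^2*G₂ - 2*b*c^2*bi + 2*b^2 - 2*b^2*c*ci - b^2*c^2) * ha + (2 - G₃^2 - 2*ci*G₃ - ci*G₁^2*G₃ - 2*ci^2 - ci^2*G₁^2 + 2*ai*G₁ - ai*ci*G₁*G₃ - 2*ai*ci^2*G₁ + 2*ai^2 - ai^2*ci^2 - c*ci*G₁^2 - 2*c*ai*ci*G₁ - 2*c*ai^2*ci - a*G₁*G₃^2 - 3*a*ci*G₁*G₃ - 2*a*ci^2*G₁ - a*c*G₁*G₃ - 2*a*c*ci*G₁ - a^2*G₃^2 - 2*a^2*ci*G₃ - a^2*ci^2 - 2*a^2*c*G₃ - 2*a^2*c*ci - a^2*c^2) * hb + (2 - G₂^2 - G₁^2 - 2*ai*G₁ - ai*G₁*G₂^2 - ai*bi*G₁*G₂ - 2*ai^2 - ai^2*G₂^2 - 2*ai^2*bi*G₂ - ai^2*bi^2 - 2*b*G₂ - b*G₁^2*G₂ - 3*b*ai*G₁*G₂ - 2*b*ai^2*G₂ - 2*b^2 - b^2*G₁^2 - 2*b^2*ai*G₁ - b^2*ai^2 - a*b*G₁*G₂ - 2*a*b^2*G₁ - a^2*b^2)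 * hc

/-- The Fricke relation: with the geodesic functions
`G₁₂, G₂₃, G₁₃, G_∞` parametrised by shear coordinates `Y₁, Y₂, Y₃` and the
constants `ω₁₂ = G₁G₂ + G₃G_∞`, `ω₂₃ = G₂G₃ + G₁G_∞`, `ω₁₃ = G₁G₃ + G₂G_∞`, one has
`G₁₂² + G₂₃² + G₁₃² − G₁₂G₂₃G₁₃ + G₁₂ω₁₂ + G₂₃ω₂₃ + G₁₃ω₁₃
  = 4 − G₁G₂G₃G_∞ − G₁² − G₂² − G₃² − G_∞²`. -/
theorem fricke_relation (Y₁ Y₂ Y₃ G₁ G₂ G₃ : ℂ)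
    (G₁₂ G₂₃ G₁₃ Ginf ω₁₂ ω₂₃ ω₁₃ : ℂ)
    (hG₁₂ : G₁₂ = exp (Y₁ + Y₂) + exp (-Y₁ - Y₂) + exp (-Y₁ + Y₂)
      + G₁ * exp Y₂ + G₂ * exp (-Y₁))
    (hG₂₃ : G₂₃ = exp (Y₂ + Y₃) + exp (-Y₂ - Y₃) + exp (-Y₂ + Y₃)
      + G₂ * exp Y₃ + G₃ * exp (-Y₂))
    (hG₁₃ : G₁₃ = exp (Y₃ + Y₁) + exp (-Y₃ - Y₁) + exp (-Y₃ + Y₁)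
      + G₃ * exp Y₁ + G₁ * exp (-Y₃))
    (hGinf : Ginf = exp (Y₁ + Y₂ + Y₃) + exp (-Y₁ - Y₂ - Y₃))
    (hω₁₂ : ω₁₂ = G₁ * G₂ + G₃ * Ginf)
    (hω₂₃ : ω₂₃ = G₂ * G₃ + G₁ * Ginf)
    (hω₁₃ : ω₁₃ = G₁ * G₃ + G₂ * Ginf) :
    G₁₂ ^ 2 + G₂₃ ^ 2 + G₁₃ ^ 2 - G₁₂ * G₂₃ * G₁₃
      + G₁₂ * ω₁₂ + G₂₃ * ω₂₃ + G₁₃ * ω₁₃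
    = 4 - G₁ * G₂ * G₃ * Ginf - G₁ ^ 2 - G₂ ^ 2 - G₃ ^ 2 - Ginf ^ 2 := by
  subst hG₁₂ hG₂₃ hG₁₃ hGinf hω₁₂ hω₂₃ hω₁₃
  have ha : cexp Y₁ * cexp (-Y₁) = 1 := by rw [← Complex.exp_add]; simp
  have hb : cexp Y₂ * cexp (-Y₂) = 1 := by rw [← Complex.exp_add]; simp
  have hc : cexp Y₃ * cexp (-Y₃) = 1 := by rw [← Complex.exp_add]; simp
  simp only [sub_eq_add_neg, Complex.exp_add]
  linear_combination fricke_key (cexp Y₁) (cexp Y₂) (cexp Y₃)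
    (cexp (-Y₁)) (cexp (-Y₂)) (cexp (-Y₃)) G₁ G₂ G₃ ha hb hc
end

section
/- The polynomial C(u,v,w,ω₁₂,ω₂₃,ω₁₃) = u² + v² + w² − uvw + u·ω₁₂ + v·ω₂₃ + w·ω₁₃ is invariant under the braid-group transformations: C ∘ β₁₂ = C and C ∘ β₂₃ = C as functions on ℂ⁶. -/
/-- The braid transformation `β₁₂` on `(u,v,w,ω₁₂,ω₂₃,ω₁₃) ∈ ℂ⁶`. -/
def β₁₂ : ℂ × ℂ × ℂ × ℂ × ℂ × ℂ → ℂ × ℂ × ℂ × ℂ × ℂ × ℂ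
  | (u, v, w, ω₁₂, ω₂₃, ω₁₃) => (u, w, u * w - v - ω₂₃, ω₁₂, ω₁₃, ω₂₃)

/-- The braid transformation `β₂₃` on `(u,v,w,ω₁₂,ω₂₃,ω₁₃) ∈ ℂ⁶`. -/
def β₂₃ : ℂ × ℂ × ℂ × ℂ × ℂ × ℂ → ℂ × ℂ × ℂ × ℂ × ℂ × ℂ
  | (u, v, w, ω₁₂, ω₂₃, ω₁₃) => (v * u - w - ω₁₃, v, u, ω₁₃, ω₂₃, ω₁₂)

/-- The polynomial `C = u² + v² + w² − uvw + uω₁₂ + vω₂₃ + wω₁₃` is invariant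
under the braid transformations: `C ∘ β₁₂ = C` and `C ∘ β₂₃ = C`. -/
theorem casimir_braid_invariant :
    (fun p : ℂ × ℂ × ℂ × ℂ × ℂ × ℂ =>
        match p with
        | (u, v, w, ω₁₂, ω₂₃, ω₁₃) =>
          u ^ 2 + v ^ 2 + w ^ 2 - u * v * w + u * ω₁₂ + v * ω₂₃ + w * ω₁₃) ∘ β₁₂
      = (fun p : ℂ × ℂ × ℂ × ℂ × ℂ × ℂ =>
          match p with
          | (u, v, w, ω₁₂, ω₂₃, ω₁₃) =>
            u ^ 2 + v ^ 2 + w ^ 2 - u * v * w + u * ω₁₂ + v * ω₂₃ + w * ω₁₃) ∧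
    (fun p : ℂ × ℂ × ℂ × ℂ × ℂ × ℂ =>
        match p with
        | (u, v, w, ω₁₂, ω₂₃, ω₁₃) =>
          u ^ 2 + v ^ 2 + w ^ 2 - u * v * w + u * ω₁₂ + v * ω₂₃ + w * ω₁₃) ∘ β₂₃
      = (fun p : ℂ × ℂ × ℂ × ℂ × ℂ × ℂ =>
          match p with
          | (u, v, w, ω₁₂, ω₂₃, ω₁₃) =>
            u ^ 2 + v ^ 2 + w ^ 2 - u * v * w + u * ω₁₂ + v * ω₂₃ + w * ω₁₃) := by
  constructor <;>
  · funext p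
    obtain ⟨u, v, w, a, b, c⟩ := p
    simp only [Function.comp_apply, β₁₂, β₂₃]
    ring
end

section
/- The composition β₁₂ ∘ β₂₃ of the braid-group transformations has order three: (β₁₂ ∘ β₂₃)³ = Id as a map ℂ⁶ → ℂ⁶. -/
/-- The composition `β₁₂ ∘ β₂₃` has order three: `(β₁₂ ∘ β₂₃)³ = Id`. -/
theorem braid_composition_order_three :
    (β₁₂ ∘ β₂₃) ∘ (β₁₂ ∘ β₂₃) ∘ (β₁₂ ∘ β₂₃) = id := by
  funext p
  obtain ⟨u, v, w, a, b, c⟩ := p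
  simp only [Function.comp_apply, β₁₂, β₂₃, id_eq]
  ring_nf
end

section
/- In the quantum setting, the quantum geodesic function G_∞ = sU₁U₂U₃ + s⁻¹U₃⁻¹U₂⁻¹U₁⁻¹ is central: it commutes with U₁, with U₂ and with U₃ (and hence with Gʰ₁₂, Gʰ₂₃ and Gʰ₁₃). -/
/-- The quantum geodesic function `G_∞ = s U₁U₂U₃ + s⁻¹ U₃⁻¹U₂⁻¹U₁⁻¹` is central:
it commutes with `U₁`, `U₂`, `U₃` (and hence with `Gʰ₁₂`, `Gʰ₂₃`, `Gʰ₁₃`). -/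
theorem quantum_Ginf_central
    {A : Type*} [Ring A] [Algebra ℂ A]
    (s q : ℂ) (hs : s ≠ 0) (hq : q = s ^ 2)
    (U₁ U₂ U₃ : Aˣ)
    (h₂₁ : (U₂ : A) * U₁ = q • ((U₁ : A) * U₂))
    (h₃₂ : (U₃ : A) * U₂ = q • ((U₂ : A) * U₃))
    (h₁₃ : (U₁ : A) * U₃ = q • ((U₃ : A) * U₁))
    (G₁ G₂ G₃ : ℂ) (G12 G23 G13 Ginf : A)
    (hG12 : G12 = s • ((U₁ : A) * U₂) + s • ((↑U₁⁻¹ : A) * ↑U₂⁻¹)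
      + s⁻¹ • ((↑U₁⁻¹ : A) * U₂) + G₁ • (U₂ : A) + G₂ • (↑U₁⁻¹ : A))
    (hG23 : G23 = s • ((U₂ : A) * U₃) + s • ((↑U₂⁻¹ : A) * ↑U₃⁻¹)
      + s⁻¹ • ((↑U₂⁻¹ : A) * U₃) + G₂ • (U₃ : A) + G₃ • (↑U₂⁻¹ : A))
    (hG13 : G13 = s • ((U₃ : A) * U₁) + s • ((↑U₃⁻¹ : A) * ↑U₁⁻¹)
      + s⁻¹ • ((↑U₃⁻¹ : A) * U₁) + G₃ • (U₁ : A) + G₁ • (↑U₃⁻¹ : A))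
    (hGinf : Ginf = s • ((U₁ : A) * U₂ * U₃) + s⁻¹ • ((↑U₃⁻¹ : A) * ↑U₂⁻¹ * ↑U₁⁻¹))
    : Commute Ginf (U₁ : A) ∧ Commute Ginf (U₂ : A) ∧ Commute Ginf (U₃ : A)
      ∧ Commute Ginf G12 ∧ Commute Ginf G23 ∧ Commute Ginf G13 := by
  have hq0 : q ≠ 0 := by rw [hq]; exact pow_ne_zero 2 hs
  set a : A := (U₁ : A) with ha
  set b : A := (U₂ : A) with hb
  set c : A := (U₃ : A) with hc
  have hca : c * a = q⁻¹ • (a * c) := by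
    rw [h₁₃, smul_smul, inv_mul_cancel₀ hq0, one_smul]
  -- the product U₁U₂U₃ commutes with each Uᵢ
  have c1 : Commute (a * b * c) a := by
    show a * b * c * a = a * (a * b * c)
    calc a * b * c * a = a * b * (q⁻¹ • (a * c)) := by rw [mul_assoc, hca]
      _ = q⁻¹ • (a * (b * a) * c) := by
          rw [mul_smul_comm]; simp only [mul_assoc]
      _ = q⁻¹ • (q • (a * (a * b) * c)) := by
          rw [h₂₁, mul_smul_comm, smul_mul_assoc]
      _ = a * (a * b * c) := by
          rw [smul_smul, inv_mul_cancel₀ hq0, one_smul]; simp only [mul_assoc]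
  have c2 : Commute (a * b * c) b := by
    show a * b * c * b = b * (a * b * c)
    calc a * b * c * b = a * b * (q • (b * c)) := by rw [mul_assoc, h₃₂]
      _ = q • (a * b * (b * c)) := by rw [mul_smul_comm]
      _ = q • ((a * b) * b * c) := by simp only [mul_assoc]
      _ = (q • (a * b)) * b * c := by rw [smul_mul_assoc, smul_mul_assoc]
      _ = b * (a * b * c) := by rw [← h₂₁]; simp only [mul_assoc]
  have c3 : Commute (a * b * c) c := by
    show a * b * c * c = c * (a * b * c)
    symm
    calc c * (a * b * c) = (q⁻¹ • (a * c)) * b * c := by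
          rw [← hca]; simp only [mul_assoc]
      _ = q⁻¹ • (a * (c * b) * c) := by
          rw [smul_mul_assoc, smul_mul_assoc]; simp only [mul_assoc]
      _ = q⁻¹ • (q • (a * (b * c) * c)) := by
          rw [h₃₂, mul_smul_comm, smul_mul_assoc]
      _ = a * b * c * c := by
          rw [smul_smul, inv_mul_cancel₀ hq0, one_smul]; simp only [mul_assoc]
  -- the inverse product
  have hVinv : ((↑U₃⁻¹ : A) * ↑U₂⁻¹ * ↑U₁⁻¹) = ((U₁ * U₂ * U₃)⁻¹ : Aˣ) := by
    simp [mul_inv_rev, mul_assoc]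
  have hV : ((U₁ * U₂ * U₃ : Aˣ) : A) = a * b * c := by
    simp [ha, hb, hc]
  have key : ∀ x : A, Commute ((U₁ * U₂ * U₃ : Aˣ) : A) x → Commute Ginf x := by
    intro x hx
    rw [hGinf, hVinv]
    exact ((hx.smul_left s).add_left ((hx.units_inv_left).smul_left s⁻¹))
  have k1 : Commute Ginf a := key a (by rw [hV]; exact c1)
  have k2 : Commute Ginf b := key b (by rw [hV]; exact c2)
  have k3 : Commute Ginf c := key c (by rw [hV]; exact c3)
  have k1' : Commute Ginf (↑U₁⁻¹ : A) := k1.units_inv_right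
  have k2' : Commute Ginf (↑U₂⁻¹ : A) := k2.units_inv_right
  have k3' : Commute Ginf (↑U₃⁻¹ : A) := k3.units_inv_right
  refine ⟨k1, k2, k3, ?_, ?_, ?_⟩
  · rw [hG12]
    exact (((((k1.mul_right k2).smul_right s).add_right
      ((k1'.mul_right k2').smul_right s)).add_right
      ((k1'.mul_right k2).smul_right s⁻¹)).add_right
      (k2.smul_right G₁)).add_right (k1'.smul_right G₂)
  · rw [hG23]
    exact (((((k2.mul_right k3).smul_right s).add_right
      ((k2'.mul_right k3').smul_right s)).add_right
      ((k2'.mul_right k3).smul_right s⁻¹)).add_right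
      (k3.smul_right G₂)).add_right (k2'.smul_right G₃)
  · rw [hG13]
    exact (((((k3.mul_right k1).smul_right s).add_right
      ((k3'.mul_right k1').smul_right s)).add_right
      ((k3'.mul_right k1).smul_right s⁻¹)).add_right
      (k1.smul_right G₃)).add_right (k3'.smul_right G₁)
end

section
/- (Computational core of Theorem 5.2: the Korotkin–Samtleben bracket of the adjoint invariants G₁₂ = −Tr(M₁M₂) and G₂₃ = −Tr(M₂M₃) reproduces the Goldman bracket.) For all 2×2 complex matrices M₁, M₂, M₃ with det M₁ = det M₂ = det M₃ = 1, one has Tr(M₁M₂M₃M₂) − Tr(M₁M₂M₂M₃) = Tr(M₁M₂)·Tr(M₂M₃) + 2·Tr(M₁M₃) − Tr(M₁)·Tr(M₃) − Tr(M₂)·Tr(M₁M₂M₃); equivalently, setting G_{ij} = −Tr(M_iM_j), G_i = −Tr(M_i), G_∞ = −Tr(M₁M₂M₃) and ω₁₃ = G₁G₃ + G₂G_∞, the left-hand side equals G₁₂·G₂₃ − 2·G₁₃ − ω₁₃. -/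
open Matrix

/-- Computational core of the Korotkin–Samtleben ⇒ Goldman bracket computation:
for `M₁, M₂, M₃ ∈ SL(2,ℂ)`,
`Tr(M₁M₂M₃M₂) − Tr(M₁M₂M₂M₃)
  = Tr(M₁M₂)Tr(M₂M₃) + 2Tr(M₁M₃) − Tr(M₁)Tr(M₃) − Tr(M₂)Tr(M₁M₂M₃)`;
equivalently, with `G_{ij} = −Tr(M_iM_j)`, `G_i = −Tr(M_i)`, `G_∞ = −Tr(M₁M₂M₃)`
and `ω₁₃ = G₁G₃ + G₂G_∞`, the left-hand side equals `G₁₂G₂₃ − 2G₁₃ − ω₁₃`. -/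
theorem korotkin_samtleben_goldman (M₁ M₂ M₃ : Matrix (Fin 2) (Fin 2) ℂ)
    (h₁ : M₁.det = 1) (h₂ : M₂.det = 1) (h₃ : M₃.det = 1) :
    (M₁ * M₂ * M₃ * M₂).trace - (M₁ * M₂ * M₂ * M₃).trace
      = (M₁ * M₂).trace * (M₂ * M₃).trace + 2 * (M₁ * M₃).trace
        - M₁.trace * M₃.trace - M₂.trace * (M₁ * M₂ * M₃).trace ∧
    (M₁ * M₂ * M₃ * M₂).trace - (M₁ * M₂ * M₂ * M₃).trace
      = (-(M₁ * M₂).trace) * (-(M₂ * M₃).trace) - 2 * (-(M₁ * M₃).trace)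
        - ((-M₁.trace) * (-M₃.trace) + (-M₂.trace) * (-(M₁ * M₂ * M₃).trace)) := by
  rw [Matrix.det_fin_two] at h₁ h₂ h₃
  constructor <;>
  · simp only [Matrix.trace_fin_two, Matrix.mul_apply, Fin.sum_univ_two]
    linear_combination (M₁ 0 0 * M₃ 0 0 + M₁ 0 1 * M₃ 1 0 + M₁ 1 0 * M₃ 0 1 + M₁ 1 1 * M₃ 1 1 - (M₁ 0 0 * M₃ 1 1 + M₁ 1 1 * M₃ 0 0 - M₁ 0 1 * M₃ 1 0 - M₁ 1 0 * M₃ 0 1)) * h₂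
end

section
/- (Braid group action β₁₂ on monodromy data) For all 2×2 complex matrices M₁, M₂, M₃ with det M₁ = det M₂ = det M₃ = 1, the braid transformation β₁₂(M₁,M₂,M₃) = (M₁M₂M₁⁻¹, M₁, M₃) acts on the invariant functions by: −Tr((M₁M₂M₁⁻¹)·M₁) = G₁₂, −Tr(M₁M₃) = G₁₃, and −Tr((M₁M₂M₁⁻¹)·M₃) = G₁₂·G₁₃ − G₂₃ − ω₂₃, where G_{ij} = −Tr(M_iM_j), G_i = −Tr(M_i), G_∞ = −Tr(M₁M₂M₃) and ω₂₃ = G₂G₃ + G₁G_∞. -/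
open Matrix

/-- Braid group action `β₁₂(M₁,M₂,M₃) = (M₁M₂M₁⁻¹, M₁, M₃)` on monodromy data:
with `G_{ij} = −Tr(M_iM_j)`, `G_i = −Tr(M_i)`, `G_∞ = −Tr(M₁M₂M₃)` and
`ω₂₃ = G₂G₃ + G₁G_∞`, one has
`−Tr((M₁M₂M₁⁻¹)M₁) = G₁₂`, `−Tr(M₁M₃) = G₁₃`, and
`−Tr((M₁M₂M₁⁻¹)M₃) = G₁₂G₁₃ − G₂₃ − ω₂₃`. -/
theorem braid_action_monodromy (M₁ M₂ M₃ : Matrix (Fin 2) (Fin 2) ℂ)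
    (h₁ : M₁.det = 1) (h₂ : M₂.det = 1) (h₃ : M₃.det = 1) :
    -((M₁ * M₂ * M₁⁻¹) * M₁).trace = -(M₁ * M₂).trace ∧
    -(M₁ * M₃).trace = -(M₁ * M₃).trace ∧
    -((M₁ * M₂ * M₁⁻¹) * M₃).trace
      = (-(M₁ * M₂).trace) * (-(M₁ * M₃).trace) - (-(M₂ * M₃).trace)
        - ((-M₂.trace) * (-M₃.trace) + (-M₁.trace) * (-(M₁ * M₂ * M₃).trace)) := by
  have hu : IsUnit M₁.det := by rw [h₁]; exact isUnit_one
  have hinv : M₁⁻¹ = M₁.adjugate := by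
    rw [Matrix.inv_def, h₁]; simp
  have hd : M₁ 0 0 * M₁ 1 1 - M₁ 0 1 * M₁ 1 0 = 1 := by
    simpa [Matrix.det_fin_two] using h₁
  refine ⟨?_, rfl, ?_⟩
  · rw [mul_assoc, Matrix.nonsing_inv_mul M₁ hu, mul_one]
  · rw [hinv]
    simp only [Matrix.trace, Matrix.diag, Matrix.mul_apply, Fin.sum_univ_two,
      Matrix.adjugate_fin_two, Matrix.cons_val', Matrix.cons_val_zero, Matrix.cons_val_one,
      Matrix.head_cons, Matrix.empty_val', Matrix.cons_val_fin_one, Matrix.head_fin_const, Matrix.of_apply]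
    linear_combination (M₂ 0 0 * M₃ 0 0 + M₂ 0 1 * M₃ 1 0 + M₂ 1 0 * M₃ 0 1 +
      M₂ 1 1 * M₃ 1 1 - (M₂ 0 0 + M₂ 1 1) * (M₃ 0 0 + M₃ 1 1)) * hd
end
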